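/- Let q be a real number with q > 0 and q ≠ 1, let h be an integer with h ≥ 1, and let n be a natural number with n ≥ 1. Then G_{n+1}^{(h)}(2 | q) = (n+1) · q^{-h} · (1+q) + q^{-2h} · G_{n+1}^{(h)}(q). -/

import Mathlib

/-- The q-analogue of a real number `x`: `[x]_q = (1 - q^x)/(1 - q)`,
where `q^x` is a real power of the positive base `q`. -/
noncomputable def qnum (q x : ℝ) : ℝ := (1 - q ^ x) / (1 - q)

/-- The (h,q)-Genocchi polynomial `G_m^{(h)}(x|q)`: `G_0^{(h)}(x|q) = 0` and for `m ≥ 1`,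
`G_m^{(h)}(x|q) = m (1+q)/(1-q)^{m-1} ∑_{k=0}^{m-1} C(m-1,k) (-1)^k q^{kx}/(1+q^{h+k})`,
with real powers of the positive base `q`. -/
noncomputable def hqGenocchi (h : ℤ) (q : ℝ) (m : ℕ) (x : ℝ) : ℝ :=
  if m = 0 then 0
  else (m : ℝ) * (1 + q) / (1 - q) ^ (m - 1) *
    ∑ k ∈ Finset.range m, ((m - 1).choose k : ℝ) * (-1 : ℝ) ^ k *
      q ^ ((k : ℝ) * x) / (1 + q ^ ((h : ℝ) + (k : ℝ)))

/-!
With `u = q^(h+k)` one has `q^(k(x+2)) = q^(kx) q^(-2h) u²` and `u²/(1+u) = (u - 1) + 1/(1+u)`.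
So each term of `G_{n+1}(x+2)` is `q^(-2h)` times the corresponding term of `G_{n+1}(x)`
plus a polynomial remainder, and by the binomial theorem the remainders sum to
`q^h (1 - q^(x+1))^n - (1 - q^x)^n`. At `x = 0` this is `q^h (1-q)^n`, since `n ≥ 1`.
-/

open Finset

lemma one_sub_pow_eq_sum_choose {R : Type*} [CommRing R] (y : R) (n : ℕ) :
    (1 - y) ^ n = ∑ k ∈ range (n + 1), (n.choose k : R) * (-1) ^ k * y ^ k := by
  rw [sub_eq_neg_add, add_pow]
  refine sum_congr rfl fun k _ => ?_
  rw [neg_pow]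
  ring

lemma sq_div_one_add {K : Type*} [Field K] {u : K} (hu : 1 + u ≠ 0) :
    u ^ 2 / (1 + u) = u - 1 + 1 / (1 + u) := by
  field_simp
  ring

lemma qnum_zero (q : ℝ) : qnum q 0 = 0 := by
  simp [qnum]

lemma qnum_one {q : ℝ} (hq : q ≠ 1) : qnum q 1 = 1 := by
  rw [qnum, Real.rpow_one, div_self (sub_ne_zero.mpr hq.symm)]

lemma hqGenocchi_succ (h : ℤ) (q : ℝ) (n : ℕ) (x : ℝ) :
    hqGenocchi h q (n + 1) x = ((n : ℝ) + 1) * (1 + q) / (1 - q) ^ n *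
      ∑ k ∈ range (n + 1), (n.choose k : ℝ) * (-1) ^ k *
        q ^ ((k : ℝ) * x) / (1 + q ^ ((h : ℝ) + k)) := by
  simp [hqGenocchi]

section

variable {q : ℝ} (hq : 0 < q) (h : ℤ) (n : ℕ) (x : ℝ)
include hq

lemma sum_choose_mul_rpow_mul_sub_one :
    ∑ k ∈ range (n + 1), (n.choose k : ℝ) * (-1) ^ k * q ^ ((k : ℝ) * x) *
        (q ^ ((h : ℝ) + k) - 1) =
      q ^ (h : ℝ) * (1 - q ^ (x + 1)) ^ n - (1 - q ^ x) ^ n := by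
  have hpow : ∀ k : ℕ, q ^ ((k : ℝ) * x) = (q ^ x) ^ k := fun k => by
    rw [mul_comm, Real.rpow_mul_natCast hq.le]
  have hpow_shift : ∀ k : ℕ,
      q ^ ((k : ℝ) * x) * q ^ ((h : ℝ) + k) = q ^ (h : ℝ) * (q ^ (x + 1)) ^ k :=
    fun k => by
      rw [hpow, Real.rpow_add hq, Real.rpow_add hq, Real.rpow_one, Real.rpow_natCast]
      ring
  rw [one_sub_pow_eq_sum_choose, one_sub_pow_eq_sum_choose, mul_sum, ← sum_sub_distrib]
  refine sum_congr rfl fun k _ => ?_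
  rw [mul_sub, mul_assoc _ (q ^ ((k : ℝ) * x)), hpow_shift k, hpow]
  ring

lemma hqGenocchi_succ_add_two :
    hqGenocchi h q (n + 1) (x + 2) =
      ((n : ℝ) + 1) * (1 + q) * q ^ (-2 * (h : ℝ)) *
          (q ^ (h : ℝ) * qnum q (x + 1) ^ n - qnum q x ^ n) +
        q ^ (-2 * (h : ℝ)) * hqGenocchi h q (n + 1) x := by
  have hsummand : ∀ k : ℕ, (n.choose k : ℝ) * (-1) ^ k * q ^ ((k : ℝ) * (x + 2)) /
      (1 + q ^ ((h : ℝ) + k)) =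
        q ^ (-2 * (h : ℝ)) * ((n.choose k : ℝ) * (-1) ^ k * q ^ ((k : ℝ) * x) *
          (q ^ ((h : ℝ) + k) - 1)) +
        q ^ (-2 * (h : ℝ)) * ((n.choose k : ℝ) * (-1) ^ k * q ^ ((k : ℝ) * x) /
          (1 + q ^ ((h : ℝ) + k))) := fun k => by
    have hu : 1 + q ^ ((h : ℝ) + k) ≠ 0 := by positivity
    have hsplit : q ^ ((k : ℝ) * (x + 2)) =
        q ^ ((k : ℝ) * x) * q ^ (-2 * (h : ℝ)) * (q ^ ((h : ℝ) + k)) ^ 2 := by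
      rw [← Real.rpow_natCast _ 2, ← Real.rpow_mul hq.le, ← Real.rpow_add hq,
        ← Real.rpow_add hq]
      ring_nf
    simp only [hsplit, mul_assoc _ (q ^ (-2 * (h : ℝ))), mul_div_assoc]
    rw [sq_div_one_add hu]
    ring
  rw [hqGenocchi_succ, hqGenocchi_succ, sum_congr rfl fun k _ => hsummand k, sum_add_distrib,
    ← mul_sum, ← mul_sum, sum_choose_mul_rpow_mul_sub_one hq, qnum, qnum, div_pow, div_pow]
  ring

end

theorem statement4_general (q : ℝ) (hq0 : 0 < q) (hq1 : q ≠ 1) (h : ℤ)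
    (n : ℕ) (hn : 1 ≤ n) :
    hqGenocchi h q (n + 1) 2 =
      ((n : ℝ) + 1) * q ^ (-(h : ℝ)) * (1 + q) + q ^ (-2 * (h : ℝ)) * hqGenocchi h q (n + 1) 0 := by
  have hexp : q ^ (-2 * (h : ℝ)) * q ^ (h : ℝ) = q ^ (-(h : ℝ)) := by
    rw [← Real.rpow_add hq0]
    ring_nf
  have hshift := hqGenocchi_succ_add_two hq0 h n 0
  rw [zero_add, zero_add, qnum_zero, qnum_one hq1, one_pow, zero_pow (by omega)] at hshift
  rw [hshift, ← hexp]
  ring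

theorem statement4 (q : ℝ) (hq0 : 0 < q) (hq1 : q ≠ 1) (h : ℤ) (hh : 1 ≤ h)
    (n : ℕ) (hn : 1 ≤ n) :
    hqGenocchi h q (n + 1) 2 =
      ((n : ℝ) + 1) * q ^ (-(h : ℝ)) * (1 + q) + q ^ (-2 * (h : ℝ)) * hqGenocchi h q (n + 1) 0 :=
  statement4_general q hq0 hq1 h n hn
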